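/- Let μ be a homogeneous S-valued measure on 𝔹 with trinary spectrum Σ, and for k ≥ 1 let Δ_k(μ) be the set of k-tuples (μ(a_1),…,μ(a_k)) over all partitions {a_1,…,a_k} of 𝔹 into k nonzero pieces. Then for N > 3, a tuple (b_1,…,b_N) ∈ S^N belongs to Δ_N(μ) if and only if (Σ_{j<k} b_j, b_k, Σ_{j>k} b_j) ∈ Σ for each k = 2,…,N−1. -/

import Mathlib

/-!
Cutting an `N`-partition before and after its `k`-th piece gives the 3-partitions needed for the
forward direction. Conversely the partition is built from left to right: suppose pieces with
union `D` realize `b 0, …, b n` and `Dᶜ` has measure `∑_{j>n} b j`. A 3-partition `A, C₁, C₂`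
realizing the triple at `k = n + 1` has `μ A = μ D` and `μ Aᶜ = μ Dᶜ`, so by homogeneity some
measure-preserving automorphism maps `A` onto `D`; it maps `C₁, C₂` onto a splitting of `Dᶜ`
into pieces of measures `b (n + 1)` and `∑_{j>n+1} b j`.
-/

variable {B : Type*} [BooleanAlgebra B] {S : Type*} [AddCommMonoid S]

/-- An `S`-valued finitely additive measure on the Boolean algebra `B`. -/
def IsBAMeasure (μ : B → S) : Prop :=
  μ ⊥ = 0 ∧ ∀ a b : B, Disjoint a b → μ (a ⊔ b) = μ a + μ b

/-- An element is proper if it differs from `⊥` and `⊤`. -/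
def IsProperElem (a : B) : Prop := a ≠ ⊥ ∧ a ≠ ⊤

/-- `{a, b, c}` is a partition of `B` into three nonzero pairwise disjoint pieces. -/
def IsPartition3 (a b c : B) : Prop :=
  a ≠ ⊥ ∧ b ≠ ⊥ ∧ c ≠ ⊥ ∧ Disjoint a b ∧ Disjoint a c ∧ Disjoint b c ∧ a ⊔ b ⊔ c = ⊤

/-- A Boolean automorphism `φ` preserves the measure `μ`. -/
def PreservesMeas (μ : B → S) (φ : B ≃o B) : Prop := ∀ x : B, μ (φ x) = μ x

/-- `μ` is homogeneous: every partial `μ`-isomorphism on a 4-element subalgebra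
(equivalently, determined by proper `a ↦ b` with `μ a = μ b`, `μ aᶜ = μ bᶜ`)
extends to a `μ`-automorphism. -/
def MeasHomogeneous (μ : B → S) : Prop :=
  ∀ a b : B, IsProperElem a → IsProperElem b → μ a = μ b → μ aᶜ = μ bᶜ →
    ∃ φ : B ≃o B, PreservesMeas μ φ ∧ φ a = b

/-- The 4 elements property (4EP). -/
def MeasHas4EP (μ : B → S) : Prop :=
  ∀ a b c d : B, IsPartition3 a b c → μ a + μ b = μ d → μ c = μ dᶜ →
    ∃ p q : B, IsProperElem p ∧ IsProperElem q ∧ Disjoint p q ∧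
      μ p = μ a ∧ μ q = μ b ∧ p ⊔ q = d

/-- The trinary spectrum of a measure. -/
def TrinarySpectrum (μ : B → S) : Set (S × S × S) :=
  {t | ∃ a b c : B, IsPartition3 a b c ∧ t = (μ a, μ b, μ c)}

/-- `b ∈ Δ_N(μ)`: the tuple `b` is the tuple of measures of an `N`-element
partition of `B`. -/
def DeltaMem (μ : B → S) {N : ℕ} (b : Fin N → S) : Prop :=
  ∃ a : Fin N → B, (∀ i, a i ≠ ⊥) ∧ (∀ i j : Fin N, i ≠ j → Disjoint (a i) (a j)) ∧
    Finset.univ.sup a = ⊤ ∧ ∀ i, μ (a i) = b i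

open Finset

section Partition

variable {ι : Type*}

structure IsIndexedPartition (s : Finset ι) (a : ι → B) : Prop where
  ne_bot : ∀ i ∈ s, a i ≠ ⊥
  supIndep : s.SupIndep a
  sup_eq_top : s.sup a = ⊤

namespace IsIndexedPartition

variable {s : Finset ι} {a : ι → B}

theorem ne_top (h : IsIndexedPartition s a) {i j : ι} (hi : i ∈ s) (hj : j ∈ s) (hij : i ≠ j) :
    a i ≠ ⊤ := fun htop =>
  h.ne_bot j hj <| (h.supIndep.pairwiseDisjoint hi hj hij).eq_bot_of_ge (htop ▸ le_top)

theorem compl_eq [DecidableEq ι] (h : IsIndexedPartition s a) {i : ι} (hi : i ∈ s) :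
    (a i)ᶜ = (s.erase i).sup a := by
  refine IsCompl.compl_eq ⟨supIndep_iff_disjoint_erase.1 h.supIndep i hi, codisjoint_iff.2 ?_⟩
  rw [← sup_insert, insert_erase hi, h.sup_eq_top]

theorem insert_update_update [DecidableEq ι] (h : IsIndexedPartition s a) {i j : ι} (hi : i ∈ s)
    (hj : j ∉ s) {u v : B} (hu : u ≠ ⊥) (hv : v ≠ ⊥) (huv : Disjoint u v) (hsup : u ⊔ v = a i) :
    IsIndexedPartition (insert j s) (Function.update (Function.update a i u) j v) := by
  set a' := Function.update (Function.update a i u) j v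
  have hij : i ≠ j := ne_of_mem_of_not_mem hi hj
  have hai : a' i = u := by simp [a', hij]
  have haj : a' j = v := by simp [a']
  have heq : ∀ x ∈ s, x ≠ i → a' x = a x := fun x hx hxi => by
    simp [a', hxi, ne_of_mem_of_not_mem hx hj]
  have hle : ∀ x ∈ s, a' x ≤ a x := fun x hx => by
    by_cases hxi : x = i
    · exact hxi ▸ hai ▸ hsup ▸ le_sup_left
    · exact (heq x hx hxi).le
  refine ⟨fun x hx => ?_, ?_, ?_⟩
  · rcases mem_insert.1 hx with rfl | hx
    · exact haj ▸ hv
    · by_cases hxi : x = i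
      · exact hxi ▸ hai ▸ hu
      · exact heq x hx hxi ▸ h.ne_bot x hx
  · have hs : (s : Set ι).PairwiseDisjoint a' := fun x hx y hy hxy =>
      (h.supIndep.pairwiseDisjoint hx hy hxy).mono (hle x hx) (hle y hy)
    refine (supIndep_iff_pairwiseDisjoint.2 hs).insert (Finset.disjoint_sup_right.2 fun x hx => ?_)
    by_cases hxi : x = i
    · exact hxi ▸ hai ▸ haj ▸ huv.symm
    · exact (h.supIndep.pairwiseDisjoint hi hx (Ne.symm hxi)).mono (haj ▸ hsup ▸ le_sup_right)
        (heq x hx hxi).le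
  · refine top_unique (h.sup_eq_top ▸ Finset.sup_le fun x hx => ?_)
    by_cases hxi : x = i
    · subst hxi
      rw [← hsup, ← hai, ← haj]
      exact sup_le (le_sup (mem_insert_of_mem hx)) (le_sup (mem_insert_self j s))
    · exact heq x hx hxi ▸ le_sup (mem_insert_of_mem hx)

theorem isPartition3_sup [Fintype ι] [DecidableEq ι] (h : IsIndexedPartition univ a)
    {s t r : Finset ι} (hs : s.Nonempty) (ht : t.Nonempty) (hr : r.Nonempty)
    (hst : Disjoint s t) (hsr : Disjoint s r) (htr : Disjoint t r) (hcover : s ∪ t ∪ r = univ) :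
    IsPartition3 (s.sup a) (t.sup a) (r.sup a) := by
  have ne_bot : ∀ {u : Finset ι}, u.Nonempty → u.sup a ≠ ⊥ := fun ⟨x, hx⟩ =>
    ne_bot_of_le_ne_bot (h.ne_bot x (mem_univ x)) (le_sup hx)
  have disj : ∀ {u v : Finset ι}, Disjoint u v → Disjoint (u.sup a) (v.sup a) := fun huv =>
    h.supIndep.disjoint_sup_sup (subset_univ _) (subset_univ _) huv
  refine ⟨ne_bot hs, ne_bot ht, ne_bot hr, disj hst, disj hsr, disj htr, ?_⟩
  rw [← sup_union, ← sup_union, hcover, h.sup_eq_top]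

end IsIndexedPartition

theorem isIndexedPartition_pair [DecidableEq ι] {a : ι → B} {i j : ι} (hij : i ≠ j)
    (hi : a i ≠ ⊥) (hj : a j ≠ ⊥) (hc : IsCompl (a i) (a j)) : IsIndexedPartition {i, j} a := by
  refine ⟨fun x hx => ?_, (supIndep_pair hij).2 hc.disjoint, ?_⟩
  · rcases mem_insert.1 hx with rfl | hx
    · exact hi
    · exact mem_singleton.1 hx ▸ hj
  · rw [sup_insert, sup_singleton, hc.sup_eq_top]

theorem deltaMem_iff {M : Type*} {μ : B → M} {N : ℕ} {b : Fin N → M} :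
    DeltaMem μ b ↔ ∃ a : Fin N → B, IsIndexedPartition univ a ∧ ∀ i, μ (a i) = b i := by
  constructor
  · rintro ⟨a, h0, hd, ht, hm⟩
    exact ⟨a, ⟨fun i _ => h0 i, supIndep_iff_pairwiseDisjoint.2 fun i _ j _ => hd i j, ht⟩, hm⟩
  · rintro ⟨a, h, hm⟩
    exact ⟨a, fun i => h.ne_bot i (mem_univ i),
      fun i j => h.supIndep.pairwiseDisjoint (mem_univ i) (mem_univ j), h.sup_eq_top, hm⟩

end Partition

theorem IsBAMeasure.map_finset_sup {μ : B → S} (hμ : IsBAMeasure μ) {ι : Type*}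
    {s : Finset ι} {a : ι → B} (hs : s.SupIndep a) : μ (s.sup a) = ∑ i ∈ s, μ (a i) := by
  induction s using Finset.cons_induction with
  | empty => simpa using hμ.1
  | cons x s hx ih =>
    rw [sup_cons, sum_cons, hμ.2 _ _ (hs (subset_cons _) (mem_cons_self x s) hx),
      ih (hs.subset (subset_cons _))]

/-- An automorphism carrying `a` to `eᶜ` carries `b, c` into `e`. -/
theorem MeasHomogeneous.exists_split {μ : B → S} (hμ : IsBAMeasure μ) (hhom : MeasHomogeneous μ)
    {a b c e : B} (habc : IsPartition3 a b c) (he : IsProperElem e) (hae : μ a = μ eᶜ)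
    (hbce : μ b + μ c = μ e) :
    ∃ u v : B, u ≠ ⊥ ∧ v ≠ ⊥ ∧ Disjoint u v ∧ u ⊔ v = e ∧ μ u = μ b ∧ μ v = μ c := by
  obtain ⟨ha, hb, hc, hab, hac, hbc, htop⟩ := habc
  have hcompl : aᶜ = b ⊔ c :=
    IsCompl.compl_eq ⟨hab.sup_right hac, codisjoint_iff.2 (by rw [← sup_assoc, htop])⟩
  have ha_top : a ≠ ⊤ := fun h => hb (disjoint_top.1 (h ▸ hab.symm))
  have he_compl : IsProperElem eᶜ := ⟨compl_eq_bot.not.2 he.2, compl_eq_top.not.2 he.1⟩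
  obtain ⟨φ, hφμ, hφa⟩ := hhom a eᶜ ⟨ha, ha_top⟩ he_compl hae
    (by rw [hcompl, compl_compl, hμ.2 _ _ hbc, hbce])
  refine ⟨φ b, φ c, ?_, ?_, hbc.map_orderIso φ, ?_, hφμ b, hφμ c⟩
  · simpa using hb
  · simpa using hc
  · rw [← map_sup, ← hcompl, map_compl, hφa, compl_compl]

section Tuples

variable {N : ℕ}

def splitTriple (b : Fin N → S) (k : Fin N) : S × S × S :=
  (∑ j ∈ univ.filter (fun j : Fin N => (j : ℕ) < (k : ℕ)), b j, b k,
    ∑ j ∈ univ.filter (fun j : Fin N => (k : ℕ) < (j : ℕ)), b j)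

theorem sum_filter_lt_val_eq_add (b : Fin N → S) {n : ℕ} (hn : n + 1 < N) :
    ∑ j ∈ univ.filter (fun j : Fin N => n < (j : ℕ)), b j =
      b ⟨n + 1, hn⟩ + ∑ j ∈ univ.filter (fun j : Fin N => n + 1 < (j : ℕ)), b j := by
  rw [← sum_insert (by simp)]
  congr 1
  ext j
  simp only [mem_filter, mem_univ, true_and, mem_insert, Fin.ext_iff]
  omega

theorem DeltaMem.splitTriple_mem {μ : B → S} (hμ : IsBAMeasure μ) {b : Fin N → S}
    (hb : DeltaMem μ b) {k : Fin N} (hk₁ : 1 ≤ (k : ℕ)) (hk₂ : (k : ℕ) ≤ N - 2) :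
    splitTriple b k ∈ TrinarySpectrum μ := by
  obtain ⟨a, ha, hμa⟩ := deltaMem_iff.1 hb
  have hsum : ∀ s : Finset (Fin N), μ (s.sup a) = ∑ j ∈ s, b j := fun s => by
    rw [hμ.map_finset_sup (ha.supIndep.subset (subset_univ s))]
    exact sum_congr rfl fun j _ => hμa j
  refine ⟨_, _, _, ha.isPartition3_sup (s := univ.filter fun j : Fin N => (j : ℕ) < (k : ℕ))
    (t := {k}) (r := univ.filter fun j : Fin N => (k : ℕ) < (j : ℕ))
    ⟨⟨0, by omega⟩, mem_filter.2 ⟨mem_univ _, hk₁⟩⟩ (singleton_nonempty k)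
    ⟨⟨k + 1, by omega⟩, mem_filter.2 ⟨mem_univ _, Nat.lt_succ_self k⟩⟩
    (disjoint_singleton_right.2 (by simp)) (disjoint_filter.2 fun j _ h => by omega)
    (disjoint_singleton_left.2 (by simp)) ?_, ?_⟩
  · ext j
    simp only [mem_union, mem_filter, mem_univ, true_and, mem_singleton, iff_true, Fin.ext_iff]
    omega
  · simp only [splitTriple, hsum, sup_singleton, hμa]

def RealizesPrefix (μ : B → S) (b : Fin N → S) (n : ℕ) (a : Fin N → B) : Prop :=
  IsIndexedPartition (univ.filter fun i : Fin N => (i : ℕ) ≤ n + 1) a ∧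
    (∀ i : Fin N, (i : ℕ) ≤ n → μ (a i) = b i) ∧
    ∀ i : Fin N, (i : ℕ) = n + 1 →
      μ (a i) = ∑ j ∈ univ.filter (fun j : Fin N => n < (j : ℕ)), b j

theorem exists_realizesPrefix_zero {μ : B → S} (hμ : IsBAMeasure μ) {b : Fin N → S}
    (hN : 2 < N) (hb : splitTriple b ⟨1, by omega⟩ ∈ TrinarySpectrum μ) :
    ∃ a, RealizesPrefix μ b 0 a := by
  obtain ⟨A, C₁, C₂, ⟨hA, hC₁, hC₂, hAC₁, hAC₂, hC₁C₂, htop⟩, htriple⟩ := hb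
  simp only [splitTriple, Prod.mk.injEq] at htriple
  obtain ⟨hμA, hμC₁, hμC₂⟩ := htriple
  have hcompl : IsCompl A (C₁ ⊔ C₂) :=
    ⟨hAC₁.sup_right hAC₂, codisjoint_iff.2 (by rw [← sup_assoc, htop])⟩
  have hpair :
      (univ.filter fun i : Fin N => (i : ℕ) ≤ 0 + 1) = {⟨0, by omega⟩, ⟨1, by omega⟩} := by
    ext i
    simp only [mem_filter, mem_univ, true_and, mem_insert, mem_singleton, Fin.ext_iff]
    omega
  refine ⟨fun i => if (i : ℕ) = 0 then A else C₁ ⊔ C₂, ?_, fun i hi => ?_, fun i hi => ?_⟩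
  · rw [hpair]
    exact isIndexedPartition_pair (by simp) hA
      (by simpa using ne_bot_of_le_ne_bot hC₁ le_sup_left) (by simpa using hcompl)
  · have hfirst : (univ.filter fun j : Fin N => (j : ℕ) < 1) = {i} := by
      ext j
      simp only [mem_filter, mem_univ, true_and, mem_singleton, Fin.ext_iff]
      omega
    dsimp only
    rw [if_pos (Nat.le_zero.1 hi), ← hμA, hfirst, sum_singleton]
  · dsimp only
    rw [if_neg (by omega), hμ.2 _ _ hC₁C₂, ← hμC₁, ← hμC₂,
      sum_filter_lt_val_eq_add b (n := 0) (by omega)]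

theorem RealizesPrefix.exists_succ {μ : B → S} (hμ : IsBAMeasure μ) (hhom : MeasHomogeneous μ)
    {b : Fin N → S} {n : ℕ} {a : Fin N → B} (ha : RealizesPrefix μ b n a) (hn : n + 2 < N)
    (hb : splitTriple b ⟨n + 1, by omega⟩ ∈ TrinarySpectrum μ) :
    ∃ a', RealizesPrefix μ b (n + 1) a' := by
  obtain ⟨hpart, hhead, hlast⟩ := ha
  obtain ⟨A, C₁, C₂, hP, htriple⟩ := hb
  simp only [splitTriple, Prod.mk.injEq] at htriple
  obtain ⟨hμA, hμC₁, hμC₂⟩ := htriple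
  set s := univ.filter fun i : Fin N => (i : ℕ) ≤ n + 1
  set i₁ : Fin N := ⟨n + 1, by omega⟩
  set i₂ : Fin N := ⟨n + 2, by omega⟩
  have h₁s : i₁ ∈ s := by simp [s, i₁]
  have h₂s : i₂ ∉ s := by simp [s, i₂]
  have hhead_set : s.erase i₁ = univ.filter fun j : Fin N => (j : ℕ) < n + 1 := by
    ext j
    simp only [s, i₁, mem_erase, mem_filter, mem_univ, true_and, ne_eq, Fin.ext_iff]
    omega
  have hμcompl : μ A = μ (a i₁)ᶜ := by
    rw [hpart.compl_eq h₁s, hμ.map_finset_sup (hpart.supIndep.subset (erase_subset _ _)),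
      hhead_set, ← hμA]
    exact sum_congr rfl fun j hj => (hhead j (Nat.le_of_lt_succ (mem_filter.1 hj).2)).symm
  have hμlast : μ C₁ + μ C₂ = μ (a i₁) := by
    rw [hlast i₁ rfl, sum_filter_lt_val_eq_add b (by omega), hμC₁, hμC₂]
  have hproper : IsProperElem (a i₁) :=
    ⟨hpart.ne_bot i₁ h₁s, hpart.ne_top h₁s (j := ⟨0, by omega⟩) (by simp [s]) (by simp [i₁])⟩
  obtain ⟨u, v, hu, hv, huv, hsup, hμu, hμv⟩ :=
    hhom.exists_split hμ hP hproper hμcompl hμlast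
  refine ⟨Function.update (Function.update a i₁ u) i₂ v, ?_, fun i hi => ?_, fun i hi => ?_⟩
  · have hs : (univ.filter fun i : Fin N => (i : ℕ) ≤ n + 1 + 1) = insert i₂ s := by
      ext j
      simp only [s, i₂, mem_insert, mem_filter, mem_univ, true_and, Fin.ext_iff]
      omega
    rw [hs]
    exact hpart.insert_update_update h₁s h₂s hu hv huv hsup
  · have hne₂ : i ≠ i₂ := Fin.ne_of_val_ne (show (i : ℕ) ≠ n + 2 by omega)
    rcases Nat.lt_or_eq_of_le hi with hi | hi
    · have hne₁ : i ≠ i₁ := Fin.ne_of_val_ne (show (i : ℕ) ≠ n + 1 by omega)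
      rw [Function.update_of_ne hne₂, Function.update_of_ne hne₁]
      exact hhead i (by omega)
    · have heq₁ : i = i₁ := Fin.ext hi
      rw [heq₁, Function.update_of_ne (heq₁ ▸ hne₂), Function.update_self, hμu, hμC₁]
  · rw [show i = i₂ from Fin.ext hi, Function.update_self, hμv, hμC₂]

theorem RealizesPrefix.deltaMem {μ : B → S} {b : Fin N → S} {a : Fin N → B}
    (ha : RealizesPrefix μ b (N - 2) a) (hN : 2 ≤ N) : DeltaMem μ b := by
  obtain ⟨hpart, hhead, hlast⟩ := ha
  have huniv : (univ.filter fun i : Fin N => (i : ℕ) ≤ N - 2 + 1) = univ := by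
    ext i
    simp only [mem_filter, mem_univ, true_and, iff_true]
    omega
  refine deltaMem_iff.2 ⟨a, huniv ▸ hpart, fun i => ?_⟩
  by_cases hi : (i : ℕ) ≤ N - 2
  · exact hhead i hi
  · have htail : (univ.filter fun j : Fin N => N - 2 < (j : ℕ)) = {i} := by
      ext j
      simp only [mem_filter, mem_univ, true_and, mem_singleton, Fin.ext_iff]
      omega
    rw [hlast i (by omega), htail, sum_singleton]

theorem deltaMem_of_splitTriple_mem {μ : B → S} (hμ : IsBAMeasure μ) (hhom : MeasHomogeneous μ)
    (hN : 3 ≤ N) {b : Fin N → S}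
    (hb : ∀ k : Fin N, 1 ≤ (k : ℕ) → (k : ℕ) ≤ N - 2 → splitTriple b k ∈ TrinarySpectrum μ) :
    DeltaMem μ b := by
  have hprefix : ∀ n, n + 2 ≤ N → ∃ a, RealizesPrefix μ b n a := by
    intro n
    induction n with
    | zero =>
      exact fun _ => exists_realizesPrefix_zero hμ hN
        (hb ⟨1, by omega⟩ le_rfl (show 1 ≤ N - 2 by omega))
    | succ n ih =>
      intro hn
      obtain ⟨a, ha⟩ := ih (by omega)
      exact ha.exists_succ hμ hhom hn
        (hb ⟨n + 1, by omega⟩ (Nat.le_add_left 1 n) (show n + 1 ≤ N - 2 by omega))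
  obtain ⟨a, ha⟩ := hprefix (N - 2) (by omega)
  exact ha.deltaMem (by omega)

end Tuples

theorem deltaN_characterization_general
    (μ : B → S) (hμ : IsBAMeasure μ) (hhom : MeasHomogeneous μ)
    {N : ℕ} (hN : 3 < N) (b : Fin N → S) :
    DeltaMem μ b ↔ ∀ k : Fin N, 1 ≤ (k : ℕ) → (k : ℕ) ≤ N - 2 →
      (∑ j ∈ Finset.univ.filter (fun j : Fin N => (j : ℕ) < (k : ℕ)), b j, b k,
       ∑ j ∈ Finset.univ.filter (fun j : Fin N => (k : ℕ) < (j : ℕ)), b j)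
        ∈ TrinarySpectrum μ :=
  ⟨fun h _ hk₁ hk₂ => h.splitTriple_mem hμ hk₁ hk₂, deltaMem_of_splitTriple_mem hμ hhom hN.le⟩

/-- for `N > 3`, a tuple `(b_1, …, b_N)` lies in `Δ_N(μ)` iff all
triples `(∑_{j<k} b_j, b_k, ∑_{j>k} b_j)` for `k = 2, …, N-1` lie in the
trinary spectrum (indices here are `0`-based: `1 ≤ k ≤ N-2`). -/
theorem deltaN_characterization [Countable B] [Nontrivial B]
    (hatomless : ∀ a : B, a ≠ ⊥ → ∃ b : B, b ≠ ⊥ ∧ b < a)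
    (μ : B → S) (hμ : IsBAMeasure μ) (hhom : MeasHomogeneous μ)
    {N : ℕ} (hN : 3 < N) (b : Fin N → S) :
    DeltaMem μ b ↔ ∀ k : Fin N, 1 ≤ (k : ℕ) → (k : ℕ) ≤ N - 2 →
      (∑ j ∈ Finset.univ.filter (fun j : Fin N => (j : ℕ) < (k : ℕ)), b j, b k,
       ∑ j ∈ Finset.univ.filter (fun j : Fin N => (k : ℕ) < (j : ℕ)), b j)
        ∈ TrinarySpectrum μ :=
  deltaN_characterization_general μ hμ hhom hN b
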